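/- Let I be a finite nonempty set, let T be a finite nonempty set of ordered triples of elements of I that is cyclically closed and covering, and let 0 < ρ₀ ≤ ρ₁. Fix x : I → ℝ with x_{ijk} ≥ 2ρ₀ for every (i,j,k) ∈ T. Then there exists C ≥ 0 (depending only on x, ρ₀, ρ₁, T) such that for every y : I → ℝ satisfying y_{ijk} ≥ 2ρ₀ for all (i,j,k) ∈ T and y_{i₀j₀k₀} ≤ 2ρ₁ for at least one (i₀,j₀,k₀) ∈ T, one has |D_T(x,y) − (1/2)·log(max_{i∈I} y(i))| ≤ C. (Abstract form of the proposition that, for a fixed base point X₀ in Teichmüller space, the Hilbert distance d_h^Γ(X₀,X) differs from (1/2)·log sup_{η∈Γ} l_η(X) by a bounded amount.) -/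
import Mathlib


/-- The combination `x_{ijk} = x(i) − x(j) + x(k)` of a triple. -/
def tricomb {V : Type*} (x : V → ℝ) (p : V × V × V) : ℝ :=
  x p.1 - x p.2.1 + x p.2.2

/-- The abstract Hilbert distance in Hamenstädt coordinates:
`D_T(x,y) = (1/2)·max_{(i,j,k)∈T} log(y_{ijk}/x_{ijk}) + (1/2)·max_{(i,j,k)∈T} log(x_{ijk}/y_{ijk})`. -/
noncomputable def DT {V : Type*} (T : Finset (V × V × V)) (hT : T.Nonempty)
    (x y : V → ℝ) : ℝ :=
  (1 / 2) * (T.sup' hT fun p => Real.log (tricomb y p / tricomb x p)) +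
  (1 / 2) * (T.sup' hT fun p => Real.log (tricomb x p / tricomb y p))

/-- Abstract form of the proposition that for a fixed base point the Hilbert distance
`d_h^Γ(X₀,X)` differs from `(1/2)·log sup_η l_η(X)` by a bounded amount: if `T` is
cyclically closed and covering and `x` has all triangle coordinates `≥ 2ρ₀`, then
there is `C ≥ 0` such that `|D_T(x,y) − (1/2)·log max_i y(i)| ≤ C` for every `y` with
all triangle coordinates `≥ 2ρ₀` and at least one triangle coordinate `≤ 2ρ₁`. -/
theorem stmt13 {I : Type*} [Fintype I] [Nonempty I]
    (T : Finset (I × I × I)) (hT : T.Nonempty)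
    (hcyc : ∀ i j k : I, (i, j, k) ∈ T → (j, k, i) ∈ T)
    (hcov : ∀ i : I, ∃ j k : I, (i, j, k) ∈ T)
    (ρ₀ ρ₁ : ℝ) (hρ₀ : 0 < ρ₀) (hρ₁ : ρ₀ ≤ ρ₁)
    (x : I → ℝ) (hx : ∀ p ∈ T, 2 * ρ₀ ≤ tricomb x p) :
    ∃ C : ℝ, 0 ≤ C ∧ ∀ y : I → ℝ,
      (∀ p ∈ T, 2 * ρ₀ ≤ tricomb y p) →
      (∃ p ∈ T, tricomb y p ≤ 2 * ρ₁) →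
      |DT T hT x y - (1 / 2) * Real.log (Finset.univ.sup' Finset.univ_nonempty y)| ≤ C := by
  classical
  set X := T.sup' hT (fun p => tricomb x p) with hXdef
  obtain ⟨q, hq⟩ := id hT
  have hXρ : 2 * ρ₀ ≤ X := le_trans (hx q hq) (Finset.le_sup' _ hq)
  have hXpos : 0 < X := by linarith
  have hxle : ∀ p ∈ T, tricomb x p ≤ X := fun p hp => Finset.le_sup' _ hp
  refine ⟨(|Real.log X| + |Real.log ρ₀| + |Real.log ρ₀ - Real.log ρ₁| +
    |Real.log X - Real.log (2 * ρ₀)|) / 2, by positivity, ?_⟩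
  intro y hy hy1
  obtain ⟨p₀, hp₀T, hp₀⟩ := hy1
  have hyi : ∀ i, 2 * ρ₀ ≤ y i := by
    intro i
    obtain ⟨j, k, hjk⟩ := hcov i
    have h1 := hy _ hjk
    have h2 := hy _ (hcyc i j k hjk)
    simp only [tricomb] at h1 h2
    linarith
  set M := Finset.univ.sup' Finset.univ_nonempty y with hMdef
  have hMi : ∀ i, y i ≤ M := fun i => Finset.le_sup' y (Finset.mem_univ i)
  have hMρ : 2 * ρ₀ ≤ M := le_trans (hyi (Classical.arbitrary I)) (hMi _)
  have hMpos : 0 < M := by linarith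
  have hub : ∀ p ∈ T, tricomb y p ≤ 2 * M := by
    intro p hp
    have := hyi p.2.1
    have := hMi p.1
    have := hMi p.2.2
    simp only [tricomb]
    linarith
  have hex : ∃ p ∈ T, M ≤ tricomb y p := by
    obtain ⟨i, _, hieq⟩ := Finset.exists_mem_eq_sup' Finset.univ_nonempty y
    obtain ⟨j, k, hjk⟩ := hcov i
    by_cases h : M ≤ tricomb y (i, j, k)
    · exact ⟨_, hjk, h⟩
    · refine ⟨(j, k, i), hcyc i j k hjk, ?_⟩
      push_neg at h
      have hyiM : y i = M := hieq.symm
      simp only [tricomb] at h ⊢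
      linarith
  have hypos : ∀ p ∈ T, 0 < tricomb y p := fun p hp => by linarith [hy p hp]
  have hxpos : ∀ p ∈ T, 0 < tricomb x p := fun p hp => by linarith [hx p hp]
  -- bounds on the first sup
  have hA_ub : (T.sup' hT fun p => Real.log (tricomb y p / tricomb x p)) ≤
      Real.log M - Real.log ρ₀ := by
    refine Finset.sup'_le _ _ fun p hp => ?_
    rw [Real.log_div (ne_of_gt (hypos p hp)) (ne_of_gt (hxpos p hp))]
    have h1 : Real.log (tricomb y p) ≤ Real.log (2 * M) :=
      Real.log_le_log (hypos p hp) (hub p hp)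
    have h2 : Real.log (2 * ρ₀) ≤ Real.log (tricomb x p) :=
      Real.log_le_log (by linarith) (hx p hp)
    rw [Real.log_mul two_ne_zero (ne_of_gt hMpos)] at h1
    rw [Real.log_mul two_ne_zero (ne_of_gt hρ₀)] at h2
    linarith
  have hA_lb : Real.log M - Real.log X ≤
      T.sup' hT fun p => Real.log (tricomb y p / tricomb x p) := by
    obtain ⟨p, hp, hMp⟩ := hex
    refine le_trans ?_ (Finset.le_sup' _ hp)
    rw [Real.log_div (ne_of_gt (hypos p hp)) (ne_of_gt (hxpos p hp))]
    have h1 : Real.log M ≤ Real.log (tricomb y p) := Real.log_le_log hMpos hMp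
    have h2 : Real.log (tricomb x p) ≤ Real.log X :=
      Real.log_le_log (hxpos p hp) (hxle p hp)
    linarith
  -- bounds on the second sup
  have hB_ub : (T.sup' hT fun p => Real.log (tricomb x p / tricomb y p)) ≤
      Real.log X - Real.log (2 * ρ₀) := by
    refine Finset.sup'_le _ _ fun p hp => ?_
    rw [Real.log_div (ne_of_gt (hxpos p hp)) (ne_of_gt (hypos p hp))]
    have h1 : Real.log (tricomb x p) ≤ Real.log X :=
      Real.log_le_log (hxpos p hp) (hxle p hp)
    have h2 : Real.log (2 * ρ₀) ≤ Real.log (tricomb y p) :=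
      Real.log_le_log (by linarith) (hy p hp)
    linarith
  have hB_lb : Real.log ρ₀ - Real.log ρ₁ ≤
      T.sup' hT fun p => Real.log (tricomb x p / tricomb y p) := by
    refine le_trans ?_ (Finset.le_sup' _ hp₀T)
    rw [Real.log_div (ne_of_gt (hxpos p₀ hp₀T)) (ne_of_gt (hypos p₀ hp₀T))]
    have h1 : Real.log (2 * ρ₀) ≤ Real.log (tricomb x p₀) :=
      Real.log_le_log (by linarith) (hx p₀ hp₀T)
    have h2 : Real.log (tricomb y p₀) ≤ Real.log (2 * ρ₁) :=
      Real.log_le_log (hypos p₀ hp₀T) hp₀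
    rw [Real.log_mul two_ne_zero (ne_of_gt hρ₀)] at h1
    rw [Real.log_mul two_ne_zero (by linarith : (0:ℝ) < ρ₁).ne'] at h2
    linarith
  rw [DT, abs_le]
  have a1 := le_abs_self (Real.log X)
  have a2 := neg_abs_le (Real.log X)
  have a3 := le_abs_self (Real.log ρ₀)
  have a4 := neg_abs_le (Real.log ρ₀)
  have a5 := le_abs_self (Real.log ρ₀ - Real.log ρ₁)
  have a6 := neg_abs_le (Real.log ρ₀ - Real.log ρ₁)
  have a7 := le_abs_self (Real.log X - Real.log (2 * ρ₀))
  have a8 := neg_abs_le (Real.log X - Real.log (2 * ρ₀))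
  constructor <;> linarith
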